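/- arXiv:2006.02832 — 4 statements merged into one kernel-verified Lean document; each statement's English description precedes it below -/
import Mathlib

section
/- Let G = ⟨a, b | aᵐ = 1, [a,b] = a^{1−r}⟩ with m > 0, gcd(r, m) = 1, and let t = gcd(m, r−1). Write xm + y(r−1) = t for integers x, y, and fix λ ∈ ℂ× with λᵗ = 1. Then the function α : G × G → ℂ× defined by α(aⁱ bʲ, a^{i₁} b^{j₁}) = λ^{i₁ y (rʲ − 1)/t} is a well-defined 2-cocycle on G. -/
/-- A normalized `ℂˣ`-valued 2-cocycle on a group `G`. -/
def IsCocycle {G : Type*} [Group G] (α : G → G → ℂˣ) : Prop :=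
  (∀ x y z : G, α x y * α (x * y) z = α x (y * z) * α y z) ∧
  (∀ g : G, α 1 g = 1 ∧ α g 1 = 1)

/-- The infinite metacyclic group `G(m,0,r) = (ℤ/mℤ) ⋊ᵣ ℤ`, built from the
automorphism `σ : x ↦ r x` of `ℤ/mℤ`. -/
abbrev MetaG (m : ℕ) (σ : AddAut (ZMod m)) : Type :=
  SemidirectProduct (Multiplicative (ZMod m)) (Multiplicative ℤ)
    (zpowersHom (MulAut (Multiplicative (ZMod m))) (AddEquiv.toMultiplicative σ))

/-!
With `μ = λ^{y(r-1)/t}` the cocycle is `α(g, g') = μ^{j i₁}`, where `j` is the `ℤ`-coordinate of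
`g` and `i₁` the `ℤ/m`-coordinate of `g'`. On a semidirect product `N ⋊ H`, any pairing
`β : H × N → ℂˣ` that is multiplicative in both arguments and invariant under the action of `H`
on `N` gives the 2-cocycle `(g, g') ↦ β(g.right, g'.left)`. Here `μ^t = 1` with `t ∣ m` and
`t ∣ r - 1`, so `(j, i₁) ↦ μ^{j i₁}` is well defined on `ℤ × ℤ/m` and invariant under `i₁ ↦ r i₁`.
It agrees with the stated formula because
`(r^j - 1)/t = ((r-1)/t)(1 + r + ⋯ + r^{j-1}) ≡ j (r-1)/t (mod t)`.
-/
theorem isCocycle_semidirectProduct_of_pairing {N H : Type*} [Group N] [Group H]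
    {φ : H →* MulAut N} (β : H →* N →* ℂˣ) (hβ : ∀ h k n, β h (φ k n) = β h n) :
    IsCocycle (fun g g' : N ⋊[φ] H => β g.right g'.left) := by
  refine ⟨fun X Y Z => ?_, fun g => ⟨?_, map_one _⟩⟩
  · simp only [SemidirectProduct.mul_left, SemidirectProduct.mul_right, map_mul,
      MonoidHom.mul_apply, hβ]
    ac_rfl
  · simp only [SemidirectProduct.one_right, map_one, MonoidHom.one_apply]

theorem MonoidHom.apply_zpow_mulAut_apply {N M : Type*} [Group N] [MulOneClass M]
    (ψ : N →* M) {τ : MulAut N} (hτ : ∀ z, ψ (τ z) = ψ z) (k : ℤ) (z : N) :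
    ψ ((τ ^ k) z) = ψ z := by
  induction k using Int.induction_on generalizing z with
  | zero => rfl
  | succ k ih => rw [zpow_add_one, MulAut.mul_apply, ih, hτ]
  | pred k ih => rw [zpow_sub_one, MulAut.mul_apply, ih, ← hτ, MulAut.apply_inv_self]

def ZMod.powHom {M : Type*} [Group M] {n : ℕ} (μ : M) (hμ : μ ^ n = 1) :
    Multiplicative (ZMod n) →* M :=
  AddMonoidHom.toMultiplicativeLeft <|
    ZMod.lift n ⟨zmultiplesHom (Additive M) (Additive.ofMul μ), by
      simpa using congrArg Additive.ofMul hμ⟩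

theorem ZMod.powHom_intCast {M : Type*} [Group M] {n : ℕ} (μ : M) (hμ : μ ^ n = 1) (k : ℤ) :
    ZMod.powHom μ hμ (Multiplicative.ofAdd (k : ZMod n)) = μ ^ k := by
  simp [ZMod.powHom]

theorem ZMod.powHom_mul_left {M : Type*} [Group M] {n : ℕ} {μ : M} (hμ : μ ^ n = 1) {r : ℤ}
    (hr : μ ^ (r - 1) = 1) (z : ZMod n) :
    ZMod.powHom μ hμ (Multiplicative.ofAdd (r * z)) =
      ZMod.powHom μ hμ (Multiplicative.ofAdd z) := by
  obtain ⟨k, rfl⟩ := ZMod.intCast_surjective z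
  rw [← Int.cast_mul, powHom_intCast, powHom_intCast]
  calc μ ^ (r * k) = (μ ^ (r - 1)) ^ k * μ ^ k := by rw [← zpow_mul, ← zpow_add]; ring_nf
    _ = μ ^ k := by rw [hr, one_zpow, one_mul]

theorem Int.ediv_pow_sub_one_modEq {t r : ℤ} (h : t ∣ r - 1) (j : ℕ) :
    (r ^ j - 1) / t ≡ j * ((r - 1) / t) [ZMOD t] := by
  have hr : r ≡ 1 [ZMOD t] := (Int.modEq_iff_dvd.mpr h).symm
  have hsum : ∑ k ∈ Finset.range j, r ^ k ≡ j [ZMOD t] := by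
    simpa using Int.ModEq.sum (s := Finset.range j) fun k _ => hr.pow k
  rw [← geom_sum_mul, Int.mul_ediv_assoc _ h]
  exact hsum.mul_right _

def metaCocycle (m : ℕ) (σ : AddAut (ZMod m)) (μ : ℂˣ) (hμ : μ ^ m = 1) :
    MetaG m σ → MetaG m σ → ℂˣ :=
  fun g g' => zpowersHom _ (ZMod.powHom μ hμ) g.right g'.left

theorem metaCocycle_mk (m : ℕ) (σ : AddAut (ZMod m)) (μ : ℂˣ) (hμ : μ ^ m = 1)
    (i i₁ j j₁ : ℤ) :
    metaCocycle m σ μ hμ ⟨Multiplicative.ofAdd (i : ZMod m), Multiplicative.ofAdd j⟩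
      ⟨Multiplicative.ofAdd (i₁ : ZMod m), Multiplicative.ofAdd j₁⟩ = μ ^ (i₁ * j) := by
  simp [metaCocycle, zpowersHom_apply, MonoidHom.zpow_apply, ZMod.powHom_intCast, zpow_mul]

theorem isCocycle_metaCocycle {m : ℕ} {σ : AddAut (ZMod m)} {r : ℤ}
    (hσ : ∀ z : ZMod m, σ z = (r : ZMod m) * z) {μ : ℂˣ} (hμ : μ ^ m = 1)
    (hμr : μ ^ (r - 1) = 1) : IsCocycle (metaCocycle m σ μ hμ) := by
  refine isCocycle_semidirectProduct_of_pairing _ fun h k n => ?_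
  have hτ : ∀ z, ZMod.powHom μ hμ (AddEquiv.toMultiplicative σ z) = ZMod.powHom μ hμ z :=
    fun z => by
      simpa [hσ] using ZMod.powHom_mul_left hμ hμr (Multiplicative.toAdd z)
  simp only [zpowersHom_apply, MonoidHom.zpow_apply,
    (ZMod.powHom μ hμ).apply_zpow_mulAut_apply hτ]

theorem stmt9_general (m : ℕ) (r : ℤ)
    (σ : AddAut (ZMod m)) (hσ : ∀ z : ZMod m, σ z = (r : ZMod m) * z)
    (t : ℕ) (ht : (t : ℤ) = Int.gcd (m : ℤ) (r - 1)) (y : ℤ)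
    (lam : ℂˣ) (hlam : lam ^ t = 1) :
    ∃ α : MetaG m σ → MetaG m σ → ℂˣ,
      IsCocycle α ∧
      ∀ (i i₁ : ℤ) (j j₁ : ℕ),
        α ⟨Multiplicative.ofAdd (i : ZMod m), Multiplicative.ofAdd (j : ℤ)⟩
          ⟨Multiplicative.ofAdd (i₁ : ZMod m), Multiplicative.ofAdd (j₁ : ℤ)⟩
          = lam ^ (i₁ * y * ((r ^ j - 1) / t)) := by
  have htm : (t : ℤ) ∣ m := ht ▸ Int.gcd_dvd_left _ _
  have htr : (t : ℤ) ∣ r - 1 := ht ▸ Int.gcd_dvd_right _ _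
  have hpow : ∀ {a b : ℤ}, a ≡ b [ZMOD t] → lam ^ a = lam ^ b := fun h =>
    zpow_eq_zpow_iff_modEq.mpr
      (h.of_dvd (Int.natCast_dvd_natCast.mpr (orderOf_dvd_of_pow_eq_one hlam)))
  set μ := lam ^ (y * ((r - 1) / t))
  have hμ : ∀ {k : ℤ}, (t : ℤ) ∣ k → μ ^ k = 1 := fun ⟨c, hc⟩ => by
    rw [hc, ← zpow_mul, ← mul_assoc, mul_comm _ (t : ℤ), mul_assoc, zpow_mul, zpow_natCast,
      hlam, one_zpow]
  have hμm : μ ^ m = 1 := by simpa using hμ htm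
  refine ⟨metaCocycle m σ μ hμm, isCocycle_metaCocycle hσ hμm (hμ htr), fun i i₁ j j₁ => ?_⟩
  rw [metaCocycle_mk, ← zpow_mul]
  apply hpow
  calc y * ((r - 1) / t) * (i₁ * j) = i₁ * y * (j * ((r - 1) / t)) := by ring
    _ ≡ i₁ * y * ((r ^ j - 1) / t) [ZMOD t] :=
      ((Int.ediv_pow_sub_one_modEq htr j).mul_left _).symm

/-- The formula `α(aⁱbʲ, a^{i₁}b^{j₁}) = λ^{i₁ y (rʲ−1)/t}` defines a 2-cocycle on the
infinite metacyclic group `G(m, 0, r)`. -/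
theorem stmt9 (m : ℕ) (hm : 0 < m) (r : ℤ) (hcop : IsCoprime r (m : ℤ))
    (σ : AddAut (ZMod m)) (hσ : ∀ z : ZMod m, σ z = (r : ZMod m) * z)
    (t : ℕ) (ht : (t : ℤ) = Int.gcd (m : ℤ) (r - 1))
    (x y : ℤ) (hxy : x * m + y * (r - 1) = t)
    (lam : ℂˣ) (hlam : lam ^ t = 1) :
    ∃ α : MetaG m σ → MetaG m σ → ℂˣ,
      IsCocycle α ∧
      ∀ (i i₁ : ℤ) (j j₁ : ℕ),
        α ⟨Multiplicative.ofAdd (i : ZMod m), Multiplicative.ofAdd (j : ℤ)⟩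
          ⟨Multiplicative.ofAdd (i₁ : ZMod m), Multiplicative.ofAdd (j₁ : ℤ)⟩
          = lam ^ (i₁ * y * ((r ^ j - 1) / t)) :=
  stmt9_general m r σ hσ t ht y lam hlam
end

section
/- Let G = ⟨a, b | aᵐ = 1, b a b⁻¹ = aʳ⟩ with m > 0 and gcd(r,m)=1, t = gcd(m, r−1), and let G⋆ = ⟨ā, b̄ | ā^{mt} = 1, b̄ ā b̄⁻¹ = āʳ⟩. Then A = ⟨āᵐ⟩ is a central subgroup of G⋆ of order t, and G⋆/A ≅ G. -/
namespace MulAut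

variable {A B : Type*} [Group A] [Group B]

lemma zpow_apply_eq_self {T : MulAut A} {x : A} (h : T x = x) (k : ℤ) : (T ^ k) x = x :=
  MulAction.mem_stabilizer_iff.mp <|
    zpow_mem (MulAction.mem_stabilizer_iff.mpr h : T ∈ MulAction.stabilizer _ x) k

lemma map_zpow_apply_of_map_apply (f : A →* B) {T : MulAut A} {S : MulAut B}
    (h : ∀ x, f (T x) = S (f x)) (k : ℤ) (x : A) : f ((T ^ k) x) = (S ^ k) (f x) := by
  have h_inv : ∀ x, f (T⁻¹ x) = S⁻¹ (f x) := fun x => by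
    apply S.injective
    rw [← h, apply_inv_self, apply_inv_self]
  induction k using Int.induction_on generalizing x with
  | zero => rfl
  | succ k ih => rw [zpow_add_one, zpow_add_one, mul_apply, mul_apply, ih, h]
  | pred k ih => rw [zpow_sub_one, zpow_sub_one, mul_apply, mul_apply, ih, h_inv]

end MulAut

namespace SemidirectProduct

lemma inl_mem_center {N G : Type*} [CommGroup N] [Group G] {φ : G →* MulAut N} {n : N}
    (h : ∀ g, φ g n = n) : inl n ∈ Subgroup.center (N ⋊[φ] G) := by
  refine Subgroup.mem_center_iff.mpr fun x => ?_
  ext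
  · simp [h, mul_comm]
  · simp

variable {N₁ G₁ N₂ G₂ : Type*} [Group N₁] [Group G₁] [Group N₂] [Group G₂]
  {φ₁ : G₁ →* MulAut N₁} {φ₂ : G₂ →* MulAut N₂} {fn : N₁ →* N₂} {fg : G₁ →* G₂}
  (h : ∀ g, fn.comp (φ₁ g).toMonoidHom = (φ₂ (fg g)).toMonoidHom.comp fn)

lemma ker_map (hfg : Function.Injective fg) : (map fn fg h).ker = fn.ker.map inl := by
  ext x
  simp only [MonoidHom.mem_ker, Subgroup.mem_map]
  constructor
  · intro hx
    have hright : x.right = 1 := hfg (by simpa using congrArg right hx)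
    exact ⟨x.left, congrArg left hx, by ext <;> simp [hright]⟩
  · rintro ⟨n, hn, rfl⟩
    simp [hn]

lemma map_surjective (hfn : Function.Surjective fn) (hfg : Function.Surjective fg) :
    Function.Surjective (map fn fg h) := by
  intro y
  obtain ⟨n, hn⟩ := hfn y.left
  obtain ⟨g, hg⟩ := hfg y.right
  exact ⟨⟨n, g⟩, by ext <;> simp [hn, hg]⟩

end SemidirectProduct

namespace ZMod

lemma intCast_mul_natCast_eq_self {m t : ℕ} {r : ℤ} (h : (t : ℤ) ∣ r - 1) :
    (r : ZMod (m * t)) * m = m := by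
  have hdvd : ((m * t : ℕ) : ℤ) ∣ (m : ℤ) - r * m := by
    rw [show (m : ℤ) - r * m = -(m * (r - 1)) by ring, dvd_neg]
    push_cast
    exact mul_dvd_mul_left _ h
  exact_mod_cast (intCast_eq_intCast_iff_dvd_sub (r * m) m (m * t)).mpr hdvd

lemma castHom_eq_zero_iff {n N : ℕ} (hdvd : n ∣ N) (z : ZMod N) :
    castHom hdvd (ZMod n) z = 0 ↔ z ∈ AddSubgroup.zmultiples (n : ZMod N) := by
  constructor
  · intro hz
    obtain ⟨k, rfl⟩ := intCast_surjective z
    rw [map_intCast, intCast_zmod_eq_zero_iff_dvd] at hz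
    obtain ⟨j, rfl⟩ := hz
    exact ⟨j, by push_cast; rw [zsmul_eq_mul, mul_comm]⟩
  · rintro ⟨j, rfl⟩
    rw [map_zsmul, map_natCast, natCast_self, smul_zero]

end ZMod

namespace MetaG

open SemidirectProduct Multiplicative

variable {N : ℕ} {τ : AddAut (ZMod N)}

lemma mk_ofAdd_one_pow (k : ℕ) :
    (⟨ofAdd 1, 1⟩ : MetaG N τ) ^ k = inl (ofAdd (k : ZMod N)) := by
  rw [show (⟨ofAdd 1, 1⟩ : MetaG N τ) = inl (ofAdd 1) from rfl, ← map_pow, ← ofAdd_nsmul,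
    nsmul_one]

lemma inl_mem_center {z : ZMod N} (hz : τ z = z) :
    inl (ofAdd z) ∈ Subgroup.center (MetaG N τ) :=
  SemidirectProduct.inl_mem_center fun g =>
    MulAut.zpow_apply_eq_self (T := AddEquiv.toMultiplicative τ) (congrArg ofAdd hz) g.toAdd

lemma orderOf_inl (z : ZMod N) : orderOf (inl (ofAdd z) : MetaG N τ) = addOrderOf z :=
  (orderOf_injective _ inl_injective _).trans (orderOf_ofAdd_eq_addOrderOf z)

variable {n : ℕ} {r : ℤ} {σ : AddAut (ZMod n)}

lemma toMultiplicative_castHom_comm (hdvd : n ∣ N) (hσ : ∀ z, σ z = r * z)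
    (hτ : ∀ z, τ z = r * z) (y : Multiplicative (ZMod N)) :
    (ZMod.castHom hdvd (ZMod n)).toAddMonoidHom.toMultiplicative (AddEquiv.toMultiplicative τ y) =
      AddEquiv.toMultiplicative σ
        ((ZMod.castHom hdvd (ZMod n)).toAddMonoidHom.toMultiplicative y) :=
  congrArg ofAdd <| by
    change ZMod.castHom hdvd (ZMod n) (τ y.toAdd) = σ (ZMod.castHom hdvd (ZMod n) y.toAdd)
    rw [hτ, hσ, map_mul, map_intCast]

def reduce (hdvd : n ∣ N) (hσ : ∀ z, σ z = r * z) (hτ : ∀ z, τ z = r * z) :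
    MetaG N τ →* MetaG n σ :=
  map (ZMod.castHom hdvd (ZMod n)).toAddMonoidHom.toMultiplicative (MonoidHom.id _) fun g =>
    MonoidHom.ext fun x =>
      MulAut.map_zpow_apply_of_map_apply _ (toMultiplicative_castHom_comm hdvd hσ hτ) g.toAdd x

variable (hdvd : n ∣ N) (hσ : ∀ z, σ z = r * z) (hτ : ∀ z, τ z = r * z)

lemma reduce_surjective : Function.Surjective (reduce hdvd hσ hτ) :=
  map_surjective _ (fun y => ZMod.castHom_surjective hdvd y.toAdd) Function.surjective_id

lemma ker_reduce : (reduce hdvd hσ hτ).ker = Subgroup.zpowers (inl (ofAdd (n : ZMod N))) := by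
  rw [reduce, ker_map _ Function.injective_id, ← MonoidHom.map_zpowers]
  congr 1
  ext z
  rw [MonoidHom.mem_ker, ← SetLike.mem_coe, ← ofAdd_image_zmultiples_eq_zpowers_ofAdd,
    Set.mem_image_equiv]
  exact ZMod.castHom_eq_zero_iff hdvd z.toAdd

end MetaG

theorem stmt10_general (m : ℕ) (hm : 0 < m) (r : ℤ)
    (t : ℕ) (ht : (t : ℤ) = Int.gcd (m : ℤ) (r - 1))
    (σ : AddAut (ZMod m)) (hσ : ∀ z : ZMod m, σ z = (r : ZMod m) * z)
    (τ : AddAut (ZMod (m * t))) (hτ : ∀ z : ZMod (m * t), τ z = (r : ZMod (m * t)) * z) :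
    (Subgroup.zpowers ((⟨Multiplicative.ofAdd (1 : ZMod (m * t)), 1⟩ : MetaG (m * t) τ) ^ m)
        ≤ Subgroup.center (MetaG (m * t) τ)) ∧
    Nat.card (Subgroup.zpowers
        ((⟨Multiplicative.ofAdd (1 : ZMod (m * t)), 1⟩ : MetaG (m * t) τ) ^ m)) = t ∧
    (∀ [inst : (Subgroup.zpowers
        ((⟨Multiplicative.ofAdd (1 : ZMod (m * t)), 1⟩ : MetaG (m * t) τ) ^ m)).Normal],
      Nonempty ((MetaG (m * t) τ ⧸ Subgroup.zpowers
        ((⟨Multiplicative.ofAdd (1 : ZMod (m * t)), 1⟩ : MetaG (m * t) τ) ^ m))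
          ≃* MetaG m σ)) := by
  have ht0 : t ≠ 0 := by
    rintro rfl
    obtain ⟨hm0, -⟩ := Int.gcd_eq_zero_iff.mp (by exact_mod_cast ht.symm)
    omega
  have hfix : τ (m : ZMod (m * t)) = m := by
    rw [hτ, ZMod.intCast_mul_natCast_eq_self (ht ▸ Int.gcd_dvd_right _ _)]
  have hker := MetaG.ker_reduce (dvd_mul_right m t) hσ hτ
  rw [MetaG.mk_ofAdd_one_pow]
  refine ⟨Subgroup.zpowers_le.mpr (MetaG.inl_mem_center hfix), ?_, fun {_} => ⟨?_⟩⟩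
  · rw [Nat.card_zpowers, MetaG.orderOf_inl, ZMod.addOrderOf_coe _ (by positivity),
      Nat.gcd_eq_right (dvd_mul_right m t), Nat.mul_div_cancel_left _ hm]
  · exact (QuotientGroup.quotientMulEquivOfEq hker.symm).trans
      (QuotientGroup.quotientKerEquivOfSurjective _ (MetaG.reduce_surjective _ hσ hτ))

/-- In `G⋆ = ⟨ā, b̄ | ā^{mt} = 1, b̄ ā b̄⁻¹ = āʳ⟩`, the subgroup `A = ⟨āᵐ⟩` is central of
order `t = gcd(m, r−1)` and `G⋆/A ≅ G(m, 0, r)`. -/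
theorem stmt10 (m : ℕ) (hm : 0 < m) (r : ℤ) (hcop : IsCoprime r (m : ℤ))
    (t : ℕ) (ht : (t : ℤ) = Int.gcd (m : ℤ) (r - 1))
    (σ : AddAut (ZMod m)) (hσ : ∀ z : ZMod m, σ z = (r : ZMod m) * z)
    (τ : AddAut (ZMod (m * t))) (hτ : ∀ z : ZMod (m * t), τ z = (r : ZMod (m * t)) * z) :
    (Subgroup.zpowers ((⟨Multiplicative.ofAdd (1 : ZMod (m * t)), 1⟩ : MetaG (m * t) τ) ^ m)
        ≤ Subgroup.center (MetaG (m * t) τ)) ∧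
    Nat.card (Subgroup.zpowers
        ((⟨Multiplicative.ofAdd (1 : ZMod (m * t)), 1⟩ : MetaG (m * t) τ) ^ m)) = t ∧
    (∀ [inst : (Subgroup.zpowers
        ((⟨Multiplicative.ofAdd (1 : ZMod (m * t)), 1⟩ : MetaG (m * t) τ) ^ m)).Normal],
      Nonempty ((MetaG (m * t) τ ⧸ Subgroup.zpowers
        ((⟨Multiplicative.ofAdd (1 : ZMod (m * t)), 1⟩ : MetaG (m * t) τ) ^ m))
          ≃* MetaG m σ)) :=
  stmt10_general m hm r t ht σ hσ τ hτ
end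

section
/- Let G be the infinite metacyclic group ⟨a, b | aᵐ = 1, b a b⁻¹ = aʳ⟩ with m > 0 and gcd(r,m) = 1. If G is nilpotent, then there exists k > 0 such that m divides (1−r)ᵏ, and consequently N = ⟨a, b^{km}⟩ is an abelian normal subgroup of G with G/N finite. -/
/-!
Commuting `a ^ c` with `b` gives `a ^ ((1 - r) c)`, so `a ^ ((1 - r) ^ n)` lies in the `n`-th term
of the lower central series, and nilpotency forces `m ∣ (1 - r) ^ n`. The subgroup `⟨a, b ^ M⟩` is
the preimage of `Mℤ` under the projection `G → ℤ`, hence normal of finite index; it is abelian as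
soon as `b ^ M` acts trivially on `ℤ/mℤ`, i.e. as soon as the order of `σ` divides `M`.
-/

open scoped commutatorElement

namespace SemidirectProduct

variable {N G : Type*} [Group N] [Group G] {φ : G →* MulAut N}

theorem commutatorElement_inl_inr (n : N) (g : G) :
    ⁅(inl n : N ⋊[φ] G), (inr g : N ⋊[φ] G)⁆ = inl (n * φ g n⁻¹) := by
  simp only [commutatorElement_def, map_mul, inl_aut, ← map_inv, mul_assoc]

theorem inl_iterate_mem_lowerCentralSeries (g : G) (n : N) (k : ℕ) :
    (inl ((fun x ↦ x * φ g x⁻¹)^[k] n) : N ⋊[φ] G) ∈ (⊤ : Subgroup _).lowerCentralSeries k := by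
  induction k with
  | zero => exact Subgroup.mem_top _
  | succ k ih =>
    rw [Function.iterate_succ_apply', ← commutatorElement_inl_inr]
    exact Subgroup.commutator_mem_commutator ih (Subgroup.mem_top _)

theorem closure_inl_inr_eq_comap_zpowers {n : N} (hn : Subgroup.zpowers n = ⊤) (g : G) :
    Subgroup.closure {(inl n : N ⋊[φ] G), inr g} = (Subgroup.zpowers g).comap rightHom := by
  apply le_antisymm
  · rw [Subgroup.closure_le]
    rintro x (rfl | rfl) <;> simp
  · intro x hx
    rw [← inl_left_mul_inr_right x]
    refine mul_mem ?_ ?_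
    · obtain ⟨j, hj⟩ := Subgroup.mem_zpowers_iff.mp (hn ▸ Subgroup.mem_top x.left)
      rw [← hj, map_zpow]
      exact zpow_mem (Subgroup.subset_closure (by simp)) _
    · obtain ⟨j, hj⟩ := Subgroup.mem_zpowers_iff.mp hx
      rw [← rightHom_eq_right, ← hj, map_zpow]
      exact zpow_mem (Subgroup.subset_closure (by simp)) _

theorem commute_of_right_mem_ker {N G : Type*} [CommGroup N] [CommGroup G] {φ : G →* MulAut N}
    {x y : N ⋊[φ] G} (hx : x.right ∈ φ.ker) (hy : y.right ∈ φ.ker) : Commute x y := by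
  rw [MonoidHom.mem_ker] at hx hy
  ext
  · simp only [mul_left, hx, hy, MulAut.one_apply, mul_comm]
  · exact mul_comm _ _

end SemidirectProduct

theorem Int.finiteIndex_zpowers_ofAdd {a : ℤ} (ha : a ≠ 0) :
    (Subgroup.zpowers (Multiplicative.ofAdd a)).FiniteIndex := by
  have h : Subgroup.zpowers (Multiplicative.ofAdd a)
      = AddSubgroup.toSubgroup (AddSubgroup.zmultiples a) := by
    ext x
    simp only [Subgroup.mem_zpowers_iff, ← ofAdd_zsmul]
    rfl
  constructor
  rw [h, AddSubgroup.index_toSubgroup, Int.index_zmultiples]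
  exact Int.natAbs_ne_zero.mpr ha

theorem ZMod.zpowers_ofAdd_one (m : ℕ) :
    Subgroup.zpowers (Multiplicative.ofAdd (1 : ZMod m)) = ⊤ := by
  refine (Subgroup.eq_top_iff' _).mpr fun x ↦ ⟨(x.toAdd.cast : ℤ), ?_⟩
  change Multiplicative.ofAdd 1 ^ _ = x
  rw [← ofAdd_zsmul, zsmul_one, ZMod.intCast_zmod_cast]
  rfl

namespace MetaG

open SemidirectProduct

variable {m : ℕ} {σ : AddAut (ZMod m)}

theorem iterate_mul_map_inv_ofAdd {r : ℤ} (hσ : ∀ z : ZMod m, σ z = (r : ZMod m) * z)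
    (c : ZMod m) (k : ℕ) :
    (fun x ↦ x * AddEquiv.toMultiplicative σ x⁻¹)^[k] (Multiplicative.ofAdd c)
      = Multiplicative.ofAdd ((((1 - r) ^ k : ℤ) : ZMod m) * c) := by
  induction k with
  | zero => simp
  | succ k ih =>
    rw [Function.iterate_succ_apply', ih]
    change Multiplicative.ofAdd (_ + σ (-_)) = _
    rw [hσ]
    congr 1
    simp only [toAdd_ofAdd]
    push_cast
    ring

theorem dvd_one_sub_pow_of_isNilpotent {r : ℤ} (hσ : ∀ z : ZMod m, σ z = (r : ZMod m) * z)
    (hnil : Group.IsNilpotent (MetaG m σ)) : ∃ n : ℕ, (m : ℤ) ∣ (1 - r) ^ n := by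
  obtain ⟨n, hn⟩ := Subgroup.nilpotent_iff_lowerCentralSeries.mp hnil
  have hmem := inl_iterate_mem_lowerCentralSeries
    (φ := zpowersHom (MulAut (Multiplicative (ZMod m))) (AddEquiv.toMultiplicative σ))
    (Multiplicative.ofAdd (1 : ℤ)) (Multiplicative.ofAdd (1 : ZMod m)) n
  rw [hn, Subgroup.mem_bot, map_eq_one_iff _ inl_injective, zpowersHom_apply, toAdd_ofAdd,
    zpow_one, iterate_mul_map_inv_ofAdd hσ, mul_one] at hmem
  exact ⟨n, (ZMod.intCast_zmod_eq_zero_iff_dvd _ m).mp (ofAdd_eq_one.mp hmem)⟩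

theorem zpowers_le_ker {M : ℕ} (hM : orderOf (AddEquiv.toMultiplicative σ) ∣ M) :
    Subgroup.zpowers (Multiplicative.ofAdd (M : ℤ)) ≤
      (zpowersHom (MulAut (Multiplicative (ZMod m))) (AddEquiv.toMultiplicative σ)).ker := by
  rw [Subgroup.zpowers_le, MonoidHom.mem_ker, zpowersHom_apply, toAdd_ofAdd, zpow_natCast]
  exact orderOf_dvd_iff_pow_eq_one.mp hM

end MetaG

theorem stmt11_general (m : ℕ) (hm : 0 < m) (r : ℤ)
    (σ : AddAut (ZMod m)) (hσ : ∀ z : ZMod m, σ z = (r : ZMod m) * z)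
    (hnil : Group.IsNilpotent (MetaG m σ)) :
    ∃ k : ℕ, 0 < k ∧ (m : ℤ) ∣ (1 - r) ^ k ∧
      (Subgroup.closure {(⟨Multiplicative.ofAdd (1 : ZMod m), 1⟩ : MetaG m σ),
          (⟨1, Multiplicative.ofAdd (1 : ℤ)⟩ : MetaG m σ) ^ (k * m)}).Normal ∧
      (∀ x ∈ Subgroup.closure {(⟨Multiplicative.ofAdd (1 : ZMod m), 1⟩ : MetaG m σ),
          (⟨1, Multiplicative.ofAdd (1 : ℤ)⟩ : MetaG m σ) ^ (k * m)},
        ∀ y ∈ Subgroup.closure {(⟨Multiplicative.ofAdd (1 : ZMod m), 1⟩ : MetaG m σ),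
          (⟨1, Multiplicative.ofAdd (1 : ℤ)⟩ : MetaG m σ) ^ (k * m)}, x * y = y * x) ∧
      (Subgroup.closure {(⟨Multiplicative.ofAdd (1 : ZMod m), 1⟩ : MetaG m σ),
          (⟨1, Multiplicative.ofAdd (1 : ℤ)⟩ : MetaG m σ) ^ (k * m)}).FiniteIndex := by
  have : NeZero m := ⟨hm.ne'⟩
  obtain ⟨n, hn⟩ := MetaG.dvd_one_sub_pow_of_isNilpotent hσ hnil
  -- `k` is a multiple of the order `d` of `σ` in the finite group `Aut(ℤ/mℤ)`, so `b ^ (k * m)`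
  -- acts trivially on `⟨a⟩`
  set d := orderOf (AddEquiv.toMultiplicative σ)
  have hd : 0 < d := (isOfFinOrder_of_finite _).orderOf_pos
  refine ⟨(n + 1) * d, by positivity, hn.trans (pow_dvd_pow _ (by nlinarith)), ?_⟩
  have hb : (⟨1, Multiplicative.ofAdd (1 : ℤ)⟩ : MetaG m σ) ^ ((n + 1) * d * m) =
      SemidirectProduct.inr (Multiplicative.ofAdd (((n + 1) * d * m : ℕ) : ℤ)) := by
    change SemidirectProduct.inr (Multiplicative.ofAdd 1) ^ _ = _
    rw [← map_pow, ← ofAdd_nsmul, nsmul_one]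
  rw [hb, show (⟨Multiplicative.ofAdd (1 : ZMod m), 1⟩ : MetaG m σ) =
      SemidirectProduct.inl (Multiplicative.ofAdd 1) from rfl,
    SemidirectProduct.closure_inl_inr_eq_comap_zpowers (ZMod.zpowers_ofAdd_one m)]
  have hker := MetaG.zpowers_le_ker (σ := σ) (dvd_mul_of_dvd_left (dvd_mul_left d (n + 1)) m)
  refine ⟨Subgroup.Normal.comap inferInstance _,
    fun x hx y hy ↦ SemidirectProduct.commute_of_right_mem_ker (hker hx) (hker hy), ?_⟩
  constructor
  rw [Subgroup.index_comap_of_surjective _ SemidirectProduct.rightHom_surjective]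
  exact (Int.finiteIndex_zpowers_ofAdd (by positivity)).index_ne_zero

/-- If the infinite metacyclic group `G(m,0,r)` is nilpotent, then `m ∣ (1−r)ᵏ` for some
`k > 0`, and `N = ⟨a, b^{km}⟩` is an abelian normal subgroup of finite index. -/
theorem stmt11 (m : ℕ) (hm : 0 < m) (r : ℤ) (hcop : IsCoprime r (m : ℤ))
    (σ : AddAut (ZMod m)) (hσ : ∀ z : ZMod m, σ z = (r : ZMod m) * z)
    (hnil : Group.IsNilpotent (MetaG m σ)) :
    ∃ k : ℕ, 0 < k ∧ (m : ℤ) ∣ (1 - r) ^ k ∧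
      (Subgroup.closure {(⟨Multiplicative.ofAdd (1 : ZMod m), 1⟩ : MetaG m σ),
          (⟨1, Multiplicative.ofAdd (1 : ℤ)⟩ : MetaG m σ) ^ (k * m)}).Normal ∧
      (∀ x ∈ Subgroup.closure {(⟨Multiplicative.ofAdd (1 : ZMod m), 1⟩ : MetaG m σ),
          (⟨1, Multiplicative.ofAdd (1 : ℤ)⟩ : MetaG m σ) ^ (k * m)},
        ∀ y ∈ Subgroup.closure {(⟨Multiplicative.ofAdd (1 : ZMod m), 1⟩ : MetaG m σ),
          (⟨1, Multiplicative.ofAdd (1 : ℤ)⟩ : MetaG m σ) ^ (k * m)}, x * y = y * x) ∧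
      (Subgroup.closure {(⟨Multiplicative.ofAdd (1 : ZMod m), 1⟩ : MetaG m σ),
          (⟨1, Multiplicative.ofAdd (1 : ℤ)⟩ : MetaG m σ) ^ (k * m)}).FiniteIndex :=
  stmt11_general m hm r σ hσ hnil
end

section
/- Let G be a group, N a subgroup of finite index in G, α a 2-cocycle on G with values in ℂ×, and V an irreducible module over the twisted group algebra ℂᵅG. If every irreducible ℂᵅN-module is finite dimensional (where α is restricted to N × N), and there exists a maximal proper ℂᵅ|_N-submodule W of V, then V is finite dimensional. -/
universe u v

/-- An `α`-representation: `ρ(1) = id` and `ρ(x)ρ(y) = α(x,y) ρ(xy)`.  This is the same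
datum as a module over the twisted group algebra `ℂᵅG`. -/
def IsProjRep {G V : Type*} [Group G] [AddCommGroup V] [Module ℂ V]
    (α : G → G → ℂˣ) (ρ : G → Module.End ℂ V) : Prop :=
  ρ 1 = 1 ∧ ∀ x y : G, ρ x * ρ y = ((α x y : ℂ) • ρ (x * y))

/-- Irreducibility of an `α`-representation (equivalently, of the corresponding
`ℂᵅG`-module): the space is nonzero and has no proper nonzero invariant subspace. -/
def IsIrred {G V : Type*} [Group G] [AddCommGroup V] [Module ℂ V]
    (ρ : G → Module.End ℂ V) : Prop :=
  (∃ v : V, v ≠ 0) ∧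
  ∀ p : Submodule ℂ V, (∀ g : G, ∀ v ∈ p, ρ g v ∈ p) → p = ⊥ ∨ p = ⊤

/-! Irreducibility makes the `G`-core `⋂_g g⁻¹W` of `W` vanish. Since `W` is `N`-stable, `g⁻¹W`
only depends on the coset `Ng`, so the core is an intersection of finitely many subspaces, each of
finite codimension because `V ⧸ W` is an irreducible `ℂᵅN`-module. Hence `V` embeds into a finite
product of finite-dimensional spaces. -/

namespace Submodule

variable {K V M : Type*} [Field K] [AddCommGroup V] [Module K V] [AddCommGroup M] [Module K M]

instance finiteDimensional_quotient_comap (f : V →ₗ[K] M) (p : Submodule K M)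
    [FiniteDimensional K (M ⧸ p)] : FiniteDimensional K (V ⧸ p.comap f) :=
  FiniteDimensional.of_injective ((p.comap f).mapQ p f le_rfl) <| by
    rw [← LinearMap.ker_eq_bot, ker_mapQ, mkQ_map_self]

theorem finiteDimensional_of_iInf_eq_bot {ι : Type*} [Finite ι] (q : ι → Submodule K V)
    [∀ i, FiniteDimensional K (V ⧸ q i)] (h : ⨅ i, q i = ⊥) : FiniteDimensional K V :=
  FiniteDimensional.of_injective (LinearMap.pi fun i => (q i).mkQ) <| by
    rw [← LinearMap.ker_eq_bot, LinearMap.ker_pi]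
    simpa only [ker_mkQ] using h

end Submodule

section ProjRep

variable {H V : Type*} [Group H] [AddCommGroup V] [Module ℂ V]
  {β : H → H → ℂˣ} {σ : H → Module.End ℂ V}

def IsSubrep (σ : H → Module.End ℂ V) (p : Submodule ℂ V) : Prop :=
  ∀ h : H, ∀ v ∈ p, σ h v ∈ p

theorem IsProjRep.apply_apply (hσ : IsProjRep β σ) (x y : H) (v : V) :
    σ x (σ y v) = (β x y : ℂ) • σ (x * y) v :=
  LinearMap.congr_fun (hσ.2 x y) v

theorem IsProjRep.restrict {α : H → H → ℂˣ} {ρ : H → Module.End ℂ V} (hρ : IsProjRep α ρ)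
    (N : Subgroup H) : IsProjRep (fun a b : N => α a b) (fun h : N => ρ h) :=
  ⟨hρ.1, fun x y => hρ.2 x y⟩

def quotientRep (σ : H → Module.End ℂ V) {p : Submodule ℂ V} (hp : IsSubrep σ p) :
    H → Module.End ℂ (V ⧸ p) :=
  fun h => p.mapQ p (σ h) (hp h)

theorem IsProjRep.quotientRep {p : Submodule ℂ V} (hσ : IsProjRep β σ) (hp : IsSubrep σ p) :
    IsProjRep β (quotientRep σ hp) := by
  refine ⟨?_, fun x y => ?_⟩ <;> ext v
  · simp [_root_.quotientRep, hσ.1]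
  · simp [_root_.quotientRep, hσ.apply_apply]

theorem isIrred_quotientRep {p : Submodule ℂ V} (hp : IsSubrep σ p) (hp_top : p ≠ ⊤)
    (hp_max : ∀ q : Submodule ℂ V, q ≠ ⊤ → IsSubrep σ q → p ≤ q → q = p) :
    IsIrred (quotientRep σ hp) := by
  refine ⟨?_, fun q hq => ?_⟩
  · obtain ⟨v, hv⟩ := SetLike.exists_of_lt hp_top.lt_top
    exact ⟨p.mkQ v, by simpa using hv.2⟩
  have hq' : IsSubrep σ (q.comap p.mkQ) := fun h v hv => hq h _ hv
  have hmap : (q.comap p.mkQ).map p.mkQ = q :=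
    Submodule.map_comap_eq_of_surjective p.mkQ_surjective q
  by_cases htop : q.comap p.mkQ = ⊤
  · right
    rw [← hmap, htop, Submodule.map_top, Submodule.range_mkQ]
  · left
    rw [← hmap, hp_max _ htop hq' (p.le_comap_mkQ q), Submodule.mkQ_map_self]

end ProjRep

section Core

variable {G V : Type*} [Group G] [AddCommGroup V] [Module ℂ V]
  {α : G → G → ℂˣ} {ρ : G → Module.End ℂ V}

theorem isSubrep_iInf_comap (hρ : IsProjRep α ρ) (W : Submodule ℂ V) :
    IsSubrep ρ (⨅ g, W.comap (ρ g)) := by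
  intro g v hv
  simp only [Submodule.mem_iInf, Submodule.mem_comap] at hv ⊢
  intro x
  rw [hρ.apply_apply]
  exact W.smul_mem _ (hv (x * g))

theorem iInf_comap_le (hρ : IsProjRep α ρ) (W : Submodule ℂ V) :
    ⨅ g, W.comap (ρ g) ≤ W := by
  simpa [hρ.1, Module.End.one_eq_id] using iInf_le (fun g => W.comap (ρ g)) 1

theorem comap_le_comap_mul (hρ : IsProjRep α ρ) {N : Subgroup G} {W : Submodule ℂ V}
    (hW : IsSubrep (fun h : N => ρ h) W) {n : G} (hn : n ∈ N) (g : G) :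
    W.comap (ρ g) ≤ W.comap (ρ (n * g)) := by
  intro v hv
  have hmul : ρ (n * g) v = (α n g : ℂ)⁻¹ • ρ n (ρ g v) := by
    rw [hρ.apply_apply, inv_smul_smul₀ (α n g).ne_zero]
  rw [Submodule.mem_comap, hmul]
  exact W.smul_mem _ (hW ⟨n, hn⟩ (ρ g v) hv)

/-- Writing `(g⁻¹N).out = g⁻¹ n`, the representative `(g⁻¹N).out⁻¹ = n⁻¹ g` of `Ng` suffices. -/
theorem iInf_comap_out_le (hρ : IsProjRep α ρ) {N : Subgroup G} {W : Submodule ℂ V}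
    (hW : IsSubrep (fun h : N => ρ h) W) :
    ⨅ c : G ⧸ N, W.comap (ρ c.out⁻¹) ≤ ⨅ g, W.comap (ρ g) := by
  refine le_iInf fun g => iInf_le_of_le (↑g⁻¹ : G ⧸ N) ?_
  have hn : g * (↑g⁻¹ : G ⧸ N).out ∈ N := by
    simpa using QuotientGroup.eq.1 (QuotientGroup.out_eq' (↑g⁻¹ : G ⧸ N)).symm
  simpa [mul_assoc] using comap_le_comap_mul hρ hW hn (↑g⁻¹ : G ⧸ N).out⁻¹

end Core

theorem stmt14_general {G : Type u} [Group G] (N : Subgroup G) (hfi : N.FiniteIndex)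
    (α : G → G → ℂˣ)
    {V : Type v} [AddCommGroup V] [Module ℂ V]
    (ρ : G → Module.End ℂ V) (hρ : IsProjRep α ρ) (hirr : IsIrred ρ)
    (hNfin : ∀ (W : Type v) [AddCommGroup W] [Module ℂ W]
      (τ : N → Module.End ℂ W),
      IsProjRep (fun h₁ h₂ : N => α (h₁ : G) (h₂ : G)) τ → IsIrred τ →
        FiniteDimensional ℂ W)
    (hmax : ∃ p : Submodule ℂ V, p ≠ ⊤ ∧ (∀ h : N, ∀ v ∈ p, ρ (h : G) v ∈ p) ∧
      ∀ q : Submodule ℂ V, q ≠ ⊤ → (∀ h : N, ∀ v ∈ q, ρ (h : G) v ∈ q) →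
        p ≤ q → q = p) :
    FiniteDimensional ℂ V := by
  obtain ⟨W, hW_top, hW, hW_max⟩ := hmax
  have : FiniteDimensional ℂ (V ⧸ W) :=
    hNfin _ _ ((hρ.restrict N).quotientRep hW) (isIrred_quotientRep hW hW_top hW_max)
  have hcore : ⨅ g, W.comap (ρ g) = ⊥ :=
    (hirr.2 _ (isSubrep_iInf_comap hρ W)).resolve_right fun h =>
      hW_top (eq_top_iff.2 (h ▸ iInf_comap_le hρ W))
  exact Submodule.finiteDimensional_of_iInf_eq_bot (fun c : G ⧸ N => W.comap (ρ c.out⁻¹))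
    (eq_bot_iff.2 (hcore ▸ iInf_comap_out_le hρ hW))

/-- If `N ≤ G` has finite index, every irreducible `ℂᵅN`-module is finite dimensional, and
the irreducible `ℂᵅG`-module `V` has a maximal proper `ℂᵅN`-submodule, then `V` is finite
dimensional. -/
theorem stmt14 {G : Type u} [Group G] (N : Subgroup G) (hfi : N.FiniteIndex)
    (α : G → G → ℂˣ) (hα : IsCocycle α)
    {V : Type v} [AddCommGroup V] [Module ℂ V]
    (ρ : G → Module.End ℂ V) (hρ : IsProjRep α ρ) (hirr : IsIrred ρ)
    (hNfin : ∀ (W : Type v) [AddCommGroup W] [Module ℂ W]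
      (τ : N → Module.End ℂ W),
      IsProjRep (fun h₁ h₂ : N => α (h₁ : G) (h₂ : G)) τ → IsIrred τ →
        FiniteDimensional ℂ W)
    (hmax : ∃ p : Submodule ℂ V, p ≠ ⊤ ∧ (∀ h : N, ∀ v ∈ p, ρ (h : G) v ∈ p) ∧
      ∀ q : Submodule ℂ V, q ≠ ⊤ → (∀ h : N, ∀ v ∈ q, ρ (h : G) v ∈ q) →
        p ≤ q → q = p) :
    FiniteDimensional ℂ V :=
  stmt14_general N hfi α ρ hρ hirr hNfin hmax
end
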